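/- Let (S, ⊑) be a cpo, let H be a nonzero finite-dimensional complex Hilbert space, let (Pᵢ, fᵢ)_{i≥1} be a monotone S-labeled sequence of partitions of H, and let P∞ be the eventual supremum of (Pᵢ). Let p∞ ∈ P∞ and let p₁, p₂, … be a sequence of cells with pᵢ ∈ Pᵢ, pᵢ not orthogonal to p_{i+1} for all i, and pᵢ not orthogonal to p∞ for all i. Then for every positive integer n there exists an integer m ≥ n such that fₙ(pₙ) ⊑ f_m(p) for every cell p ∈ P_m that is not orthogonal to p∞. -/

import Mathlib

variable {H : Type*} [NormedAddCommGroup H] [InnerProductSpace ℂ H]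

/-- Two subspaces of a complex inner product space are orthogonal when every vector of
one is orthogonal to every vector of the other. -/
def Orth (p q : Submodule ℂ H) : Prop :=
  ∀ x ∈ p, ∀ y ∈ q, @inner ℂ H _ x y = 0

/-- A partition of `H` is a set of nonzero closed subspaces of `H` that are pairwise
orthogonal and whose supremum in the complete lattice of closed subspaces of `H`
(i.e. the topological closure of the submodule supremum) is all of `H`. -/
def IsPartition (P : Set (Submodule ℂ H)) : Prop :=
  (∀ p ∈ P, p ≠ ⊥) ∧
  (∀ p ∈ P, IsClosed (p : Set H)) ∧
  (∀ p ∈ P, ∀ q ∈ P, p ≠ q → Orth p q) ∧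
  (sSup P).topologicalClosure = ⊤

/-- `P₁` refines `P₂` when every cell of `P₁` is contained in some cell of `P₂`. -/
def Refines (P₁ P₂ : Set (Submodule ℂ H)) : Prop :=
  ∀ p ∈ P₁, ∃ q ∈ P₂, p ≤ q

/-- A multicell of a partition `P` is the supremum (in the lattice of closed subspaces)
of a possibly empty subset of `P`. -/
def IsMulticell (P : Set (Submodule ℂ H)) (m : Submodule ℂ H) : Prop :=
  ∃ C ⊆ P, m = (sSup C).topologicalClosure

variable {S : Type*} [PartialOrder S]

/-- A monotone `S`-labeled sequence of partitions of `H`: a sequence `P i` of partitions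
together with labelings `f i` of their cells such that for `i ≤ j` and non-orthogonal cells
`p ∈ P i`, `q ∈ P j` one has `f i p ⊑ f j q`. -/
def MonotoneLabeled (P : ℕ → Set (Submodule ℂ H)) (f : ℕ → Submodule ℂ H → S) : Prop :=
  ∀ i j : ℕ, i ≤ j → ∀ p ∈ P i, ∀ q ∈ P j, ¬ Orth p q → f i p ≤ f j q

/-- A partition `Pinf` is the eventual supremum of the sequence `P` if, for all sufficiently
large `n`, `Pinf` is the least upper bound of `{P i : i ≥ n}` in the refinement order. -/
def IsEventualSup (P : ℕ → Set (Submodule ℂ H)) (Pinf : Set (Submodule ℂ H)) : Prop :=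
  ∃ N : ℕ, ∀ n, N ≤ n →
    (∀ i, n ≤ i → Refines (P i) Pinf) ∧
      ∀ Q : Set (Submodule ℂ H), IsPartition Q →
        (∀ i, n ≤ i → Refines (P i) Q) → Refines Pinf Q

/-!
Suppose no such `m` exists, and call a cell of `P m` bad if it meets `pinf` but its label is not
above `s = f n (p n)`. For large `m` the bad cells lie in `pinf`, and since labels only grow along
non-orthogonal cells, the span `B m` of the bad cells of `P m` decreases with `m`; in finite
dimension it is constant, equal to some nonzero `B`, from an index `M` on. From then on every cell meeting `pinf` lies in `B` or
in `Bᗮ`, so all late `P m` refine the partition obtained by splitting `pinf` into `B` and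
`pinf ⊓ Bᗮ`; minimality of the eventual supremum forces `B = pinf`. But labels also grow along the
chain, so `p M` is good, hence a nonzero subspace of `pinf ⊓ Bᗮ = ⊥`.
-/

def splitCell (P : Set (Submodule ℂ H)) (p B : Submodule ℂ H) : Set (Submodule ℂ H) :=
  insert B (insert (p ⊓ Bᗮ) (P \ {p}))

def badSpan (P : ℕ → Set (Submodule ℂ H)) (f : ℕ → Submodule ℂ H → S) (pinf : Submodule ℂ H)
    (s : S) (m : ℕ) : Submodule ℂ H :=
  sSup {c ∈ P m | ¬ Orth c pinf ∧ ¬ s ≤ f m c}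

theorem orth_iff_isOrtho {p q : Submodule ℂ H} : Orth p q ↔ p ⟂ q :=
  Submodule.isOrtho_iff_inner_eq.symm

theorem Submodule.exists_forall_ge_eq_of_antitoneOn {K V : Type*} [DivisionRing K]
    [AddCommGroup V] [Module K V] [FiniteDimensional K V] {g : ℕ → Submodule K V} {a : ℕ}
    (hg : AntitoneOn g (Set.Ici a)) : ∃ M, a ≤ M ∧ ∀ j, M ≤ j → g j = g M := by
  let g' : ℕ →o (Submodule K V)ᵒᵈ :=
    ⟨fun k => OrderDual.toDual (g (a + k)), fun k l hkl =>
      hg (Set.mem_Ici.2 (by omega)) (Set.mem_Ici.2 (by omega)) (by omega)⟩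
  obtain ⟨k, hk⟩ := IsArtinian.monotone_stabilizes g'
  refine ⟨a + k, by omega, fun j hj => ?_⟩
  obtain ⟨l, rfl⟩ := Nat.exists_eq_add_of_le hj
  rw [add_assoc]
  exact congrArg OrderDual.ofDual (hk (k + l) (by omega)).symm

namespace IsPartition

variable {P D : Set (Submodule ℂ H)} {p q c B : Submodule ℂ H}

theorem isOrtho (hP : IsPartition P) (hp : p ∈ P) (hq : q ∈ P) (hpq : p ≠ q) : p ⟂ q :=
  orth_iff_isOrtho.1 (hP.2.2.1 p hp q hq hpq)

theorem sSup_eq_top [FiniteDimensional ℂ H] (hP : IsPartition P) : sSup P = ⊤ := by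
  simpa [(sSup P).closed_of_finiteDimensional.submodule_topologicalClosure_eq] using hP.2.2.2

theorem le_sSup_of_isOrtho [FiniteDimensional ℂ H] (hP : IsPartition P) (hD : D ⊆ P)
    (hc : ∀ q ∈ P \ D, c ⟂ q) : c ≤ sSup D := by
  set A := sSup (P \ D)
  have hDA : sSup D ≤ Aᗮ := Submodule.isOrtho_iff_le.1 <| Submodule.isOrtho_sSup_left.2
    fun d hd => Submodule.isOrtho_sSup_right.2
      fun q hq => hP.isOrtho (hD hd) hq.1 (by rintro rfl; exact hq.2 hd)
  have hAD : A ⊔ sSup D = ⊤ := by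
    rw [← sSup_union, Set.sdiff_union_of_subset hD, hP.sSup_eq_top]
  calc c ≤ Aᗮ ⊓ (A ⊔ sSup D) :=
        le_inf (Submodule.isOrtho_iff_le.1 (Submodule.isOrtho_sSup_right.2 hc)) (hAD ▸ le_top)
    _ = Aᗮ ⊓ A ⊔ sSup D := (inf_sup_assoc_of_le _ hDA).symm
    _ = sSup D := by rw [inf_comm, Submodule.inf_orthogonal_eq_bot, bot_sup_eq]

theorem le_sSup_or_le_orthogonal (hP : IsPartition P) (hD : D ⊆ P) (hc : c ∈ P) :
    c ≤ sSup D ∨ c ≤ (sSup D)ᗮ := by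
  by_cases hcD : c ∈ D
  · exact Or.inl (le_sSup hcD)
  · exact Or.inr <| Submodule.isOrtho_iff_le.1 <| Submodule.isOrtho_sSup_right.2
      fun d hd => hP.isOrtho hc (hD hd) (by rintro rfl; exact hcD hd)

theorem le_of_refines_of_not_orth {R : Set (Submodule ℂ H)} (hP : IsPartition P)
    (hRP : Refines R P) (hc : c ∈ R) (hp : p ∈ P) (hcp : ¬ Orth c p) : c ≤ p := by
  obtain ⟨q, hq, hcq⟩ := hRP c hc
  by_contra hqp
  exact hcp (orth_iff_isOrtho.2 ((hP.isOrtho hq hp (by rintro rfl; exact hqp hcq)).mono_left hcq))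

theorem split [FiniteDimensional ℂ H] (hP : IsPartition P) (hp : p ∈ P) (hB : B ≤ p)
    (hB0 : B ≠ ⊥) (hpB0 : p ⊓ Bᗮ ≠ ⊥) : IsPartition (splitCell P p B) := by
  have hle_p : ∀ q ∈ splitCell P p B, q ∉ P \ {p} → q ≤ p := by
    rintro q (rfl | rfl | hq) hq'
    exacts [hB, inf_le_left, absurd hq hq']
  have hisOrtho : ∀ q ∈ splitCell P p B, ∀ r ∈ splitCell P p B, q ≠ r → q ⟂ r := by
    have hBB' : B ⟂ p ⊓ Bᗮ := (Submodule.isOrtho_orthogonal_right B).mono_right inf_le_right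
    intro q hq r hr hqr
    by_cases hqP : q ∈ P \ {p}
    · by_cases hrP : r ∈ P \ {p}
      · exact hP.isOrtho hqP.1 hrP.1 hqr
      · exact (hP.isOrtho hqP.1 hp hqP.2).mono_right (hle_p r hr hrP)
    · by_cases hrP : r ∈ P \ {p}
      · exact ((hP.isOrtho hrP.1 hp hrP.2).mono_right (hle_p q hq hqP)).symm
      · rcases hq with rfl | rfl | hq <;> rcases hr with rfl | rfl | hr <;>
          first | exact absurd rfl hqr | exact hBB' | exact hBB'.symm | exact absurd ‹_› ‹_ ∉ _›
  have hsSup : sSup (splitCell P p B) = ⊤ := by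
    refine top_le_iff.1 (hP.sSup_eq_top ▸ sSup_le fun q hq => ?_)
    by_cases hqp : q = p
    · calc q = B ⊔ Bᗮ ⊓ p := by
            rw [hqp, Submodule.sup_orthogonal_inf_of_hasOrthogonalProjection hB]
        _ ≤ sSup (splitCell P p B) :=
            sup_le (le_sSup (Set.mem_insert _ _)) (inf_comm p Bᗮ ▸ le_sSup (by simp [splitCell]))
    · exact le_sSup (by simp [splitCell, hq, hqp])
  refine ⟨?_, fun q _ => q.closed_of_finiteDimensional,
    fun q hq r hr hqr => orth_iff_isOrtho.2 (hisOrtho q hq r hr hqr), ?_⟩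
  · rintro q (rfl | rfl | hq)
    exacts [hB0, hpB0, hP.1 q hq.1]
  · rw [hsSup]
    exact top_le_iff.1 (Submodule.le_topologicalClosure _)

theorem not_refines_splitCell (hP : IsPartition P) (hp : p ∈ P) (hB : B ≤ p) (hB0 : B ≠ ⊥)
    (hBp : B ≠ p) : ¬ Refines P (splitCell P p B) := by
  intro hrefines
  obtain ⟨q, hq, hpq⟩ := hrefines p hp
  rcases hq with rfl | rfl | hq
  · exact hBp (le_antisymm hB hpq)
  · exact hB0 <| Submodule.isOrtho_self.1 <|
      ((Submodule.isOrtho_orthogonal_right B).mono_right (le_inf_iff.1 hpq).2).mono_right hB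
  · exact hP.1 p hp (Submodule.isOrtho_self.1 ((hP.isOrtho hq.1 hp hq.2).mono_left hpq))

theorem refines_splitCell {R : Set (Submodule ℂ H)} (hR : IsPartition R) (hP : IsPartition P)
    (hRP : Refines R P) (hp : p ∈ P)
    (hsplit : ∀ c ∈ R, ¬ Orth c p → c ≤ B ∨ c ≤ Bᗮ) : Refines R (splitCell P p B) := by
  intro c hc
  by_cases hcp : Orth c p
  · obtain ⟨q, hq, hcq⟩ := hRP c hc
    refine ⟨q, Or.inr (Or.inr ⟨hq, fun hqp => ?_⟩), hcq⟩
    subst hqp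
    exact hR.1 c hc (Submodule.isOrtho_self.1 ((orth_iff_isOrtho.1 hcp).mono_right hcq))
  · rcases hsplit c hc hcp with hcB | hcB
    · exact ⟨B, Set.mem_insert _ _, hcB⟩
    · exact ⟨p ⊓ Bᗮ, Or.inr (Or.inl rfl),
        le_inf (hP.le_of_refines_of_not_orth hRP hc hp hcp) hcB⟩

end IsPartition

section LabeledSequence

variable {P : ℕ → Set (Submodule ℂ H)} {f : ℕ → Submodule ℂ H → S} {Pinf : Set (Submodule ℂ H)}
  {pinf : Submodule ℂ H}

theorem IsEventualSup.exists_forall_refines (hev : IsEventualSup P Pinf) :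
    ∃ N, ∀ i, N ≤ i → Refines (P i) Pinf :=
  hev.imp fun N hN => (hN N le_rfl).1

theorem IsEventualSup.eq_bot_or_eq_of_eventually_split [FiniteDimensional ℂ H]
    (hP : ∀ i, IsPartition (P i)) (hev : IsEventualSup P Pinf) (hPinf : IsPartition Pinf)
    (hpinf : pinf ∈ Pinf) {B : Submodule ℂ H} (hB : B ≤ pinf)
    (hsplit : ∃ M, ∀ i, M ≤ i → ∀ c ∈ P i, ¬ Orth c pinf → c ≤ B ∨ c ≤ Bᗮ) :
    B = ⊥ ∨ B = pinf := by
  by_contra! hne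
  obtain ⟨hB0, hBpinf⟩ := hne
  have hpinfB0 : pinf ⊓ Bᗮ ≠ ⊥ := by
    intro h
    apply hBpinf
    rw [← Submodule.sup_orthogonal_inf_of_hasOrthogonalProjection hB, inf_comm, h, sup_bot_eq]
  obtain ⟨N, hN⟩ := hev
  obtain ⟨M, hM⟩ := hsplit
  refine hPinf.not_refines_splitCell hpinf hB hB0 hBpinf <|
    (hN (max N M) (le_max_left _ _)).2 _ (hPinf.split hpinf hB hB0 hpinfB0) fun i hi => ?_
  exact (hP i).refines_splitCell hPinf ((hN N le_rfl).1 i (le_of_max_le_left hi)) hpinf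
    (hM i (le_of_max_le_right hi))

theorem MonotoneLabeled.le_of_chain (hf : MonotoneLabeled P f) {p : ℕ → Submodule ℂ H}
    (hp : ∀ i, p i ∈ P i) (hchain : ∀ i, ¬ Orth (p i) (p (i + 1))) {n i : ℕ} (hni : n ≤ i) :
    f n (p n) ≤ f i (p i) := by
  induction i, hni using Nat.le_induction with
  | base => exact le_rfl
  | succ i _ ih => exact ih.trans (hf i (i + 1) i.le_succ _ (hp i) _ (hp (i + 1)) (hchain i))

theorem badSpan_antitoneOn [FiniteDimensional ℂ H] (hP : ∀ i, IsPartition (P i))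
    (hf : MonotoneLabeled P f) (hPinf : IsPartition Pinf) (hpinf : pinf ∈ Pinf) {a : ℕ}
    (href : ∀ j, a ≤ j → Refines (P j) Pinf) (s : S) :
    AntitoneOn (badSpan P f pinf s) (Set.Ici a) := by
  intro i hi j _ hij
  refine sSup_le fun c ⟨hc, hcpinf, hsc⟩ => (hP i).le_sSup_of_isOrtho (Set.sep_subset _ _) ?_
  have hc_le : c ≤ pinf :=
    hPinf.le_of_refines_of_not_orth (href j (le_trans hi hij)) hc hpinf hcpinf
  rintro q ⟨hq, hq_bad⟩
  by_contra hcq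
  have hqc : ¬ Orth q c := fun h => hcq (orth_iff_isOrtho.1 h).symm
  refine hq_bad ⟨hq, fun hqpinf => hqc ?_, fun hsq => hsc (hsq.trans (hf i j hij q hq c hc hqc))⟩
  exact orth_iff_isOrtho.2 ((orth_iff_isOrtho.1 hqpinf).mono_right hc_le)

end LabeledSequence

theorem exists_index_label_above_general
    [FiniteDimensional ℂ H]
    (P : ℕ → Set (Submodule ℂ H)) (hP : ∀ i, IsPartition (P i))
    (f : ℕ → Submodule ℂ H → S) (hf : MonotoneLabeled P f)
    (Pinf : Set (Submodule ℂ H)) (hPinf : IsPartition Pinf)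
    (hev : IsEventualSup P Pinf)
    (pinf : Submodule ℂ H) (hpinf : pinf ∈ Pinf)
    (p : ℕ → Submodule ℂ H) (hp : ∀ i, p i ∈ P i)
    (hchain : ∀ i, ¬ Orth (p i) (p (i + 1)))
    (hporth : ∀ i, ¬ Orth (p i) pinf)
    (n : ℕ) :
    ∃ m : ℕ, n ≤ m ∧ ∀ c ∈ P m, ¬ Orth c pinf → f n (p n) ≤ f m c := by
  by_contra! hbad
  obtain ⟨N, hN⟩ := hev.exists_forall_refines
  obtain ⟨M, hM, hstable⟩ := Submodule.exists_forall_ge_eq_of_antitoneOn <|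
    badSpan_antitoneOn hP hf hPinf hpinf (a := max n N)
      (fun j hj => hN j (le_of_max_le_right hj)) (f n (p n))
  set B := badSpan P f pinf (f n (p n))
  have hpM_pinf : p M ≤ pinf :=
    hPinf.le_of_refines_of_not_orth (hN M (le_of_max_le_right hM)) (hp M) hpinf (hporth M)
  have hpM_B : p M ≤ (B M)ᗮ := Submodule.isOrtho_iff_le.1 <| Submodule.isOrtho_sSup_right.2
    fun c hc => (hP M).isOrtho (hp M) hc.1 fun h => hc.2.2 (h ▸ hf.le_of_chain hp hchain
      (le_of_max_le_left hM))
  have hB_pinf : B M ≤ pinf := sSup_le fun c hc =>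
    hPinf.le_of_refines_of_not_orth (hN M (le_of_max_le_right hM)) hc.1 hpinf hc.2.1
  rcases hev.eq_bot_or_eq_of_eventually_split hP hPinf hpinf hB_pinf
    ⟨M, fun j hj c hc _ => by
      rw [← hstable j hj]; exact (hP j).le_sSup_or_le_orthogonal (Set.sep_subset _ _) hc⟩
    with hB0 | hBpinf
  · obtain ⟨c, hc, hcpinf, hsc⟩ := hbad M (le_of_max_le_left hM)
    exact (hP M).1 c hc (le_bot_iff.1 (hB0 ▸ le_sSup ⟨hc, hcpinf, hsc⟩))
  · exact (hP M).1 (p M) (hp M) <| Submodule.isOrtho_self.1 <|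
      (Submodule.isOrtho_iff_le.2 (hBpinf ▸ hpM_B)).mono_right hpM_pinf

/-- Let `S` be a cpo, `H` a nonzero finite-dimensional complex Hilbert space,
`(P i, f i)` a monotone `S`-labeled sequence of partitions of `H`, and `Pinf` the eventual
supremum of `(P i)`.  Let `pinf ∈ Pinf` and let `p i ∈ P i` be cells with consecutive cells
not orthogonal and each `p i` not orthogonal to `pinf`.  Then for every `n` there exists
`m ≥ n` such that `f n (p n) ⊑ f m c` for every cell `c ∈ P m` not orthogonal to `pinf`. -/
theorem exists_index_label_above
    (hcpo : ∀ g : ℕ → S, Monotone g → ∃ s, IsLUB (Set.range g) s)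
    [FiniteDimensional ℂ H] [Nontrivial H]
    (P : ℕ → Set (Submodule ℂ H)) (hP : ∀ i, IsPartition (P i))
    (f : ℕ → Submodule ℂ H → S) (hf : MonotoneLabeled P f)
    (Pinf : Set (Submodule ℂ H)) (hPinf : IsPartition Pinf)
    (hev : IsEventualSup P Pinf)
    (pinf : Submodule ℂ H) (hpinf : pinf ∈ Pinf)
    (p : ℕ → Submodule ℂ H) (hp : ∀ i, p i ∈ P i)
    (hchain : ∀ i, ¬ Orth (p i) (p (i + 1)))
    (hporth : ∀ i, ¬ Orth (p i) pinf)
    (n : ℕ) :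
    ∃ m : ℕ, n ≤ m ∧ ∀ c ∈ P m, ¬ Orth c pinf → f n (p n) ≤ f m c :=
  exists_index_label_above_general P hP f hf Pinf hPinf hev pinf hpinf p hp hchain hporth n
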